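/- Let L be a first-order language with no relation symbols, let {w_ω} be a system of words for L that is invertible on the L-structures B and H, and let s : B → B be a bijection that is an isomorphism from B to B*. If T ⊆ B × B is an H-closed congruence, then the set s⁻¹T = {(a,b) ∈ B × B : (s(a), s(b)) ∈ T} is an H*-closed congruence, where H-closedness for s⁻¹T is taken with respect to L-homomorphisms from B into H*. -/
import Mathlib


open FirstOrder FirstOrder.Language

/-- Realization of a term in an explicitly given structure. -/
def realizeIn {L : Language} {M : Type*} (S : L.Structure M) {α : Type*}
    (v : α → M) (t : L.Term α) : M :=
  @FirstOrder.Language.Term.realize L M S α v t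

/-- The structure `M*` induced on `M` by a system of words `W`: each `n`-ary function
symbol `f` is interpreted by the verbal operation induced by the word `W n f`. -/
def starStructure {L : Language} (W : ∀ n, L.Functions n → L.Term (Fin n))
    {M : Type*} (S : L.Structure M) : L.Structure M where
  funMap {n} f x := realizeIn S x (W n f)
  RelMap {n} r x := S.RelMap r x

/-- `φ : M → N` is an `L`-homomorphism from `SM` to `SN` (for a language with no relation
symbols this is exactly compatibility with all function symbols). -/
def IsHomOn {L : Language} {M N : Type*} (SM : L.Structure M) (SN : L.Structure N)
    (φ : M → N) : Prop :=
  ∀ (n : ℕ) (f : L.Functions n) (x : Fin n → M),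
    φ (SM.funMap f x) = SN.funMap f (φ ∘ x)

/-- The family of terms `U` inverts the system of words `W` on the structure `S`:
the original operations of `S` are the verbal operations of `starStructure W S`
induced by the terms `U`. -/
def Inverts {L : Language} (W U : ∀ n, L.Functions n → L.Term (Fin n))
    {M : Type*} (S : L.Structure M) : Prop :=
  ∀ (n : ℕ) (f : L.Functions n) (a : Fin n → M),
    realizeIn (starStructure W S) a (U n f) = S.funMap f a

/-- The kernel of a map as a set of pairs. -/
def kerSet {B H : Type*} (φ : B → H) : Set (B × B) := {p | φ p.1 = φ p.2}

/-- `T ⊆ B × B` is `H`-closed: it equals the intersection of the kernels of all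
homomorphisms `B → H` whose kernel contains `T`. -/
def IsClosedIn {L : Language} {B H : Type*} (SB : L.Structure B) (SH : L.Structure H)
    (T : Set (B × B)) : Prop :=
  T = {p : B × B | ∀ φ : B → H, IsHomOn SB SH φ → T ⊆ kerSet φ → φ p.1 = φ p.2}

/-- A congruence on `B`: an equivalence relation compatible with all operations. -/
def IsCongruence {L : Language} {B : Type*} (SB : L.Structure B) (T : Set (B × B)) : Prop :=
  Equivalence (fun a b => (a, b) ∈ T) ∧
    ∀ (n : ℕ) (f : L.Functions n) (a b : Fin n → B),
      (∀ j, (a j, b j) ∈ T) → (SB.funMap f a, SB.funMap f b) ∈ T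

/-- The bijection `s : B ≃ B` is an isomorphism from `B` to `B*`. -/
def IsStarIso {L : Language} (W : ∀ n, L.Functions n → L.Term (Fin n))
    {B : Type*} (SB : L.Structure B) (s : B ≃ B) : Prop :=
  IsHomOn SB (starStructure W SB) s ∧ IsHomOn (starStructure W SB) SB s.symm

/-- Congruences are preserved by term operations. -/
lemma term_cong {L : Language} {B : Type*} (SB : L.Structure B) (T : Set (B × B))
    (hT : IsCongruence SB T) {α : Type*} (v w : α → B) (h : ∀ j, (v j, w j) ∈ T)
    (t : L.Term α) : (realizeIn SB v t, realizeIn SB w t) ∈ T := by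
  induction t with
  | var i => exact h i
  | func f ts ih =>
    simp only [realizeIn, Term.realize] at *
    exact hT.2 _ f _ _ ih

/-- Homomorphisms commute with term realization. -/
lemma hom_term {L : Language} {M N : Type*} (SM : L.Structure M) (SN : L.Structure N)
    {φ : M → N} (hφ : IsHomOn SM SN φ) {α : Type*} (v : α → M) (t : L.Term α) :
    φ (realizeIn SM v t) = realizeIn SN (φ ∘ v) t := by
  induction t with
  | var i => rfl
  | func f ts ih =>
    simp only [realizeIn, Term.realize] at *
    rw [hφ]
    congr 1
    funext i
    exact ih i

/-- if `W` is invertible on `B` and `H`, `s : B ≃ B` is an isomorphism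
from `B` to `B*`, and `T` is an `H`-closed congruence, then `s⁻¹T` is an `H*`-closed
congruence (closedness with respect to homomorphisms from `B` into `H*`). -/
theorem stmt8 {L : Language} (hL : ∀ n, IsEmpty (L.Relations n))
    (W : ∀ n, L.Functions n → L.Term (Fin n))
    {B H : Type*} (SB : L.Structure B) (SH : L.Structure H)
    (hinv : ∃ U : ∀ n, L.Functions n → L.Term (Fin n), Inverts W U SB ∧ Inverts W U SH)
    (s : B ≃ B) (hs : IsStarIso W SB s)
    (T : Set (B × B)) (hTcong : IsCongruence SB T) (hTcl : IsClosedIn SB SH T) :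
    IsCongruence SB {p : B × B | (s p.1, s p.2) ∈ T} ∧
      IsClosedIn SB (starStructure W SH) {p : B × B | (s p.1, s p.2) ∈ T} := by
  obtain ⟨⟨hrefl, hsymm, htrans⟩, hcompat⟩ := hTcong
  constructor
  · -- congruence
    refine ⟨⟨fun a => hrefl (s a), fun h => hsymm h, fun h1 h2 => htrans h1 h2⟩,
      fun n f a b hab => ?_⟩
    have h1 : s (SB.funMap f a) = realizeIn SB (s ∘ a) (W n f) := hs.1 n f a
    have h2 : s (SB.funMap f b) = realizeIn SB (s ∘ b) (W n f) := hs.1 n f b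
    simp only [Set.mem_setOf_eq, h1, h2]
    exact term_cong SB T ⟨⟨hrefl, hsymm, htrans⟩, hcompat⟩ _ _ hab (W n f)
  · -- closedness
    apply Set.eq_of_subset_of_subset
    · intro p hp ψ _ hker
      exact hker hp
    · intro p hp
      simp only [Set.mem_setOf_eq] at hp ⊢
      -- use H-closedness of T
      have := hTcl
      unfold IsClosedIn at this
      rw [Set.ext_iff] at this
      apply ((this (s p.1, s p.2)).2)
      intro φ hφ hTker
      -- ψ := φ ∘ s is a hom SB → SH*
      have hψ : IsHomOn SB (starStructure W SH) (φ ∘ s) := by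
        intro n f x
        have h1 : s (SB.funMap f x) = realizeIn SB (s ∘ x) (W n f) := hs.1 n f x
        show φ (s (SB.funMap f x)) = realizeIn SH (φ ∘ s ∘ x) (W n f)
        rw [h1]
        exact hom_term SB SH hφ (s ∘ x) (W n f)
      have hkerψ : {p : B × B | (s p.1, s p.2) ∈ T} ⊆ kerSet (φ ∘ s) := by
        intro q hq
        exact hTker hq
      exact hp (φ ∘ s) hψ hkerψ
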